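/- Every linear automorphism of ℙ² (over a field of characteristic ≠ 2, 3) preserving the cuspidal cubic C : x₀x₂² = x₁³ and fixing the cusp (1:0:0) is of the form (x₀, x₁, x₂) ↦ (x₀, λ²x₁, λ³x₂) for some nonzero scalar λ. -/

import Mathlib

/-!
Since the cusp is fixed, `g` has first column `(c, 0, 0)`. Pulling the cubic back along the
parametrization `s ↦ (s³ : s : 1)` gives a polynomial identity
`(c s³ + a s + d₀)(b₂ s + d₂)² = (b₁ s + d₁)³` in `s`, valid on the infinite field `k`.
Comparing coefficients (degree 5, then 2, 1, 0) kills `b₂`, `d₁`, `a`, `d₀` in turn, using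
`det g = c b₁ d₂ ≠ 0` and `3 ≠ 0`; the cubic coefficient leaves `c d₂² = b₁³`, so `λ = d₂ / b₁`.
-/

open Polynomial

def cuspidalCubic (k : Type*) [Field k] : Set (Fin 3 → k) :=
  {v | v ≠ 0 ∧ v 0 * v 2 ^ 2 = v 1 ^ 3}

theorem cube_mem_cuspidalCubic {k : Type*} [Field k] (s : k) :
    ![s ^ 3, s, 1] ∈ cuspidalCubic k := by
  exact ⟨fun h => by simpa using congrFun h 2, by simp⟩

theorem eq_zero_of_forall_sum_mul_pow_eq_zero {k : Type*} [Field k] [Infinite k] {n : ℕ}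
    (A : Fin n → k) (h : ∀ s : k, ∑ i, A i * s ^ (i : ℕ) = 0) : A = 0 := by
  set p : k[X] := ∑ i : Fin n, monomial (i : ℕ) (A i)
  have hp : p = 0 := Polynomial.funext fun s => by simp [p, eval_finsetSum, h]
  funext j
  have hcoeff : p.coeff j = A j := by
    simp [p, finsetSum_coeff, coeff_monomial, Fin.val_inj]
  rw [← hcoeff, hp, coeff_zero, Pi.zero_apply]

theorem coeffs_of_forall_cubic_mul_sq_eq_cube {k : Type*} [Field k] [Infinite k]
    (h3 : (3 : k) ≠ 0) {c a d₀ b₁ d₁ b₂ d₂ : k} (hdet : c * (b₁ * d₂ - d₁ * b₂) ≠ 0)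
    (h : ∀ s, (c * s ^ 3 + a * s + d₀) * (b₂ * s + d₂) ^ 2 = (b₁ * s + d₁) ^ 3) :
    b₂ = 0 ∧ d₁ = 0 ∧ a = 0 ∧ d₀ = 0 ∧ c * d₂ ^ 2 = b₁ ^ 3 := by
  have hA := congrFun (eq_zero_of_forall_sum_mul_pow_eq_zero
    ![d₀ * d₂ ^ 2 - d₁ ^ 3, a * d₂ ^ 2 + 2 * d₀ * b₂ * d₂ - 3 * b₁ * d₁ ^ 2,
      2 * a * b₂ * d₂ + d₀ * b₂ ^ 2 - 3 * b₁ ^ 2 * d₁, c * d₂ ^ 2 + a * b₂ ^ 2 - b₁ ^ 3,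
      2 * c * b₂ * d₂, c * b₂ ^ 2]
    fun s => by
      simp only [Fin.sum_univ_six, Matrix.cons_val, Fin.coe_ofNat_eq_mod]
      linear_combination h s)
  have hc : c ≠ 0 := left_ne_zero_of_mul hdet
  have hb₂ : b₂ = 0 := by simpa [hc] using hA 5
  subst hb₂
  obtain ⟨hb₁, hd₂⟩ : b₁ ≠ 0 ∧ d₂ ≠ 0 := by simpa [hc, not_or] using hdet
  have hd₁ : d₁ = 0 := by simpa [h3, hb₁] using hA 2
  subst hd₁
  exact ⟨rfl, rfl, by simpa [hd₂] using hA 1, by simpa [hd₂] using hA 0,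
    sub_eq_zero.mp (by simpa using hA 3)⟩

theorem exists_eq_of_mulVec_eq_smul {k : Type*} [Field k] {g : Matrix (Fin 3) (Fin 3) k}
    {c : k} (h : g.mulVec ![1, 0, 0] = c • ![1, 0, 0]) :
    ∃ a d₀ b₁ d₁ b₂ d₂, g = !![c, a, d₀; 0, b₁, d₁; 0, b₂, d₂] := by
  have col : ∀ i, g i 0 = c • (![1, 0, 0] : Fin 3 → k) i := fun i => by
    simpa [Matrix.mulVec, dotProduct, Fin.sum_univ_three] using congrFun h i
  refine ⟨g 0 1, g 0 2, g 1 1, g 1 2, g 2 1, g 2 2, ?_⟩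
  conv_lhs => rw [Matrix.eta_fin_three g]
  rw [show g 0 0 = c by simpa using col 0, show g 1 0 = 0 by simpa using col 1,
    show g 2 0 = 0 by simpa using col 2]

theorem fin_three_diagonal_eq_smul {k : Type*} [Field k] {c b₁ d₂ : k} (hb₁ : b₁ ≠ 0)
    (h : c * d₂ ^ 2 = b₁ ^ 3) :
    !![c, 0, 0; 0, b₁, 0; 0, 0, d₂] = c • Matrix.diagonal ![1, (d₂ / b₁) ^ 2, (d₂ / b₁) ^ 3] := by
  have e1 : c * (d₂ / b₁) ^ 2 = b₁ := by field_simp; linear_combination h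
  have e2 : c * (d₂ / b₁) ^ 3 = d₂ := by field_simp; linear_combination d₂ * h
  ext i j
  fin_cases i <;> fin_cases j <;> simp [e1, e2]

theorem stmt5 {k : Type*} [Field k] [IsAlgClosed k]
    (h3 : (3 : k) ≠ 0)
    (g : Matrix (Fin 3) (Fin 3) k) (hg : IsUnit g)
    (hC : (fun v => g.mulVec v) '' {v : Fin 3 → k | v ≠ 0 ∧ v 0 * (v 2) ^ 2 = (v 1) ^ 3}
        = {v : Fin 3 → k | v ≠ 0 ∧ v 0 * (v 2) ^ 2 = (v 1) ^ 3})
    (hcusp : ∃ c : k, c ≠ 0 ∧ g.mulVec ![1, 0, 0] = c • ![1, 0, 0]) :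
    ∃ lam c : k, lam ≠ 0 ∧ c ≠ 0 ∧
      g = c • Matrix.diagonal ![1, lam ^ 2, lam ^ 3] := by
  obtain ⟨c, hc, hcv⟩ := hcusp
  obtain ⟨a, d₀, b₁, d₁, b₂, d₂, rfl⟩ := exists_eq_of_mulVec_eq_smul hcv
  have hdet : c * (b₁ * d₂ - d₁ * b₂) ≠ 0 := by
    have := ((Matrix.isUnit_iff_isUnit_det _).mp hg).ne_zero
    rw [Matrix.det_fin_three] at this
    simpa [mul_sub, mul_assoc] using this
  have hcurve : ∀ s : k, (c * s ^ 3 + a * s + d₀) * (b₂ * s + d₂) ^ 2 = (b₁ * s + d₁) ^ 3 :=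
    fun s => by
      have := (hC.subset ⟨_, cube_mem_cuspidalCubic s, rfl⟩).2
      simpa [Matrix.mulVec, dotProduct, Fin.sum_univ_three] using this
  obtain ⟨rfl, rfl, rfl, rfl, hrel⟩ := coeffs_of_forall_cubic_mul_sq_eq_cube h3 hdet hcurve
  obtain ⟨hb₁, hd₂⟩ : b₁ ≠ 0 ∧ d₂ ≠ 0 := by simpa [hc, not_or] using hdet
  exact ⟨d₂ / b₁, c, div_ne_zero hd₂ hb₁, hc, fin_three_diagonal_eq_smul hb₁ hrel⟩
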